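/- Let Z be a positive integer with Z ≤ n. There exist an encoder E ∈ ℝ^{Z×n} and a decoder D ∈ ℝ^{n×Z} such that Tr(K(I − DE) Ψ (I − DE)ᵀ Kᵀ) = Σ_{i=Z+1}^{n} μᵢ; hence the minimum of the task-aware compression loss over all E ∈ ℝ^{Z×n} and D ∈ ℝ^{n×Z} equals Σ_{i=Z+1}^{n} μᵢ. -/

import Mathlib

/-!
Put `X = K L Uᵀ`, where the rows of `U` are the eigenvectors `uᵢ`; then `Xᵀ X = diag(μ₁, …, μₙ)`.
Since `Ψ = L Lᵀ` and `U` is orthogonal, the loss of `(D, E)` is `‖X - (K D)(E L Uᵀ)‖²` in the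
Frobenius norm. Let `Q = Wᵀ W` be the orthogonal projection onto the row space of `E L Uᵀ`, which
has dimension at most `Z`. Subtracting a matrix with rows in that space does not change
`X (1 - Q)`, so the loss is at least `tr(X (1 - Q) Xᵀ) = Σⱼ μⱼ (1 - Qⱼⱼ)`. The diagonal entries of
`Q` lie in `[0, 1]` and sum to at most `Z`, so for decreasing `μ` this is at least
`μ_{Z+1} + ⋯ + μₙ`. Equality holds when `Q` projects onto the first `Z` coordinates, that is, for
`E = W U L⁻¹` and `D = L Uᵀ Wᵀ` with `W` the first `Z` rows of the identity.
-/

open Matrix Finset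

lemma sum_mul_le_sum_of_threshold {ι : Type*} [Fintype ι] [DecidableEq ι] (s : Finset ι)
    {d t : ι → ℝ} {c : ℝ} (hc : 0 ≤ c) (hs : ∀ j ∈ s, c ≤ d j) (hsc : ∀ j ∉ s, d j ≤ c)
    (ht₀ : ∀ j, 0 ≤ t j) (ht₁ : ∀ j, t j ≤ 1) (hts : ∑ j, t j ≤ #s) :
    ∑ j, d j * t j ≤ ∑ j ∈ s, d j := by
  have hin : ∑ j ∈ s, d j * t j ≤ ∑ j ∈ s, (d j + c * (t j - 1)) :=
    sum_le_sum fun j hj => by nlinarith [hs j hj, ht₁ j]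
  have hout : ∑ j ∈ sᶜ, d j * t j ≤ ∑ j ∈ sᶜ, c * t j :=
    sum_le_sum fun j hj => mul_le_mul_of_nonneg_right (hsc j (mem_compl.1 hj)) (ht₀ j)
  rw [← sum_add_sum_compl s] at hts ⊢
  simp only [sum_add_distrib, ← mul_sum, sum_sub_distrib, sum_const, nsmul_one] at hin hout
  nlinarith

lemma sum_mul_le_sum_lt_of_antitone {n : ℕ} (Z : ℕ) {d t : Fin n → ℝ} (hd : Antitone d)
    (hd₀ : ∀ j, 0 ≤ d j) (ht₀ : ∀ j, 0 ≤ t j) (ht₁ : ∀ j, t j ≤ 1) (hts : ∑ j, t j ≤ Z) :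
    ∑ j, d j * t j ≤ ∑ j : Fin n with j.val < Z, d j := by
  by_cases hZ : Z < n
  · refine sum_mul_le_sum_of_threshold _ (hd₀ ⟨Z, hZ⟩) (fun j hj => hd ?_) (fun j hj => hd ?_)
      ht₀ ht₁ ?_
    · simp only [mem_filter, mem_univ, true_and] at hj
      exact Fin.mk_le_of_le_val hj.le
    · simp only [mem_filter, mem_univ, true_and, not_lt] at hj
      exact Fin.le_iff_val_le_val.mpr hj
    · rwa [Fin.card_filter_val_lt, min_eq_right hZ.le]
  · rw [filter_true_of_mem fun j _ => by omega]
    exact sum_le_sum fun j _ => mul_le_of_le_one_right (hd₀ j) (ht₁ j)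

section Projection

variable {k m n r : Type*} {W : Matrix r n ℝ}

lemma trace_mul_transpose_self_nonneg [Fintype m] [Fintype n] (B : Matrix m n ℝ) :
    0 ≤ (B * Bᵀ).trace := by
  simpa using (posSemidef_self_mul_conjTranspose B).trace_nonneg

lemma diag_transpose_mul_self_nonneg [Fintype r] (j : n) : 0 ≤ (Wᵀ * W) j j := by
  simpa [mul_apply] using sum_nonneg fun k (_ : k ∈ univ) => mul_self_nonneg (W k j)

variable [Fintype n] [Fintype r] [DecidableEq r]

lemma trace_transpose_mul_self (hW : W * Wᵀ = 1) : (Wᵀ * W).trace = Fintype.card r := by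
  rw [trace_mul_comm, hW, trace_one]

lemma transpose_mul_self_mul_transpose (hW : W * Wᵀ = 1) :
    (Wᵀ * W) * (Wᵀ * W)ᵀ = Wᵀ * W := by
  rw [transpose_mul, transpose_transpose, Matrix.mul_assoc, ← Matrix.mul_assoc W, hW,
    Matrix.one_mul]

lemma diag_transpose_mul_self_le_one (hW : W * Wᵀ = 1) (j : n) : (Wᵀ * W) j j ≤ 1 := by
  have hsq : (Wᵀ * W) j j * (Wᵀ * W) j j ≤ (Wᵀ * W) j j := by
    conv_rhs => rw [← transpose_mul_self_mul_transpose hW]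
    simpa only [mul_apply (M := Wᵀ * W), transpose_apply] using
      single_le_sum (f := fun l => (Wᵀ * W) j l * (Wᵀ * W) j l) (fun l _ => mul_self_nonneg _)
        (mem_univ j)
  nlinarith [diag_transpose_mul_self_nonneg (W := W) j]

variable [DecidableEq n]

lemma one_sub_transpose_mul_self_mul_transpose (hW : W * Wᵀ = 1) :
    (1 - Wᵀ * W) * (1 - Wᵀ * W)ᵀ = 1 - Wᵀ * W := by
  have hQt : (Wᵀ * W)ᵀ = Wᵀ * W := by rw [transpose_mul, transpose_transpose]
  have hQ := transpose_mul_self_mul_transpose hW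
  rw [hQt] at hQ
  rw [transpose_sub, transpose_one, hQt, Matrix.sub_mul, Matrix.mul_sub, Matrix.mul_sub, hQ]
  simp

lemma mul_one_sub_mul_transpose_self (hW : W * Wᵀ = 1) (X : Matrix m n ℝ) :
    (X * (1 - Wᵀ * W)) * (X * (1 - Wᵀ * W))ᵀ = X * (1 - Wᵀ * W) * Xᵀ := by
  rw [transpose_mul, Matrix.mul_assoc, ← Matrix.mul_assoc (1 - Wᵀ * W),
    one_sub_transpose_mul_self_mul_transpose hW, Matrix.mul_assoc]

lemma trace_mul_one_sub_le [Fintype m] [Fintype k] (hW : W * Wᵀ = 1) {F : Matrix k n ℝ}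
    (hF : F * (Wᵀ * W) = F) (X : Matrix m n ℝ) (C : Matrix m k ℝ) :
    (X * (1 - Wᵀ * W) * Xᵀ).trace ≤ ((X - C * F) * (X - C * F)ᵀ).trace := by
  set A := X - C * F
  have hA : A * (1 - Wᵀ * W) = X * (1 - Wᵀ * W) := by
    rw [Matrix.sub_mul, Matrix.mul_assoc C, Matrix.mul_sub F, Matrix.mul_one, hF, sub_self,
      Matrix.mul_zero, sub_zero]
  have hsplit : A * Aᵀ = (A * Wᵀ) * (A * Wᵀ)ᵀ + (A * (1 - Wᵀ * W)) * (A * (1 - Wᵀ * W))ᵀ := by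
    rw [mul_one_sub_mul_transpose_self hW]
    simp only [transpose_mul, transpose_transpose, Matrix.mul_sub, Matrix.sub_mul,
      Matrix.mul_one, Matrix.mul_assoc]
    abel
  rw [hsplit, hA, mul_one_sub_mul_transpose_self hW, trace_add]
  linarith [trace_mul_transpose_self_nonneg (A * Wᵀ)]

end Projection

lemma exists_mul_transpose_eq_one_and_mul_transpose_mul_eq {k n : Type*} [Fintype k] [Fintype n]
    (F : Matrix k n ℝ) :
    ∃ r ≤ Fintype.card k, ∃ W : Matrix (Fin r) n ℝ, W * Wᵀ = 1 ∧ F * (Wᵀ * W) = F := by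
  let V := Submodule.span ℝ (Set.range fun i => WithLp.toLp 2 (F i) : Set (EuclideanSpace ℝ n))
  let b := stdOrthonormalBasis ℝ V
  refine ⟨Module.finrank ℝ V, finrank_range_le_card _,
    of fun a j => (b a : EuclideanSpace ℝ n) j, ?_, ?_⟩
  · ext a a'
    have := orthonormal_iff_ite.1 b.orthonormal a a'
    simp only [Submodule.coe_inner, PiLp.inner_apply, RCLike.inner_apply, conj_trivial] at this
    simp only [mul_apply, one_apply, of_apply, transpose_apply, ← this]
    exact sum_congr rfl fun _ _ => mul_comm _ _
  · rw [← Matrix.mul_assoc]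
    ext i l
    have hmem : WithLp.toLp 2 (F i) ∈ V := Submodule.subset_span ⟨i, rfl⟩
    have := congrArg (fun x : V => (x : EuclideanSpace ℝ n) l) (b.sum_repr' ⟨_, hmem⟩)
    simp only [Submodule.coe_inner, PiLp.inner_apply, RCLike.inner_apply, conj_trivial,
      Submodule.coe_sum, Submodule.coe_smul, WithLp.ofLp_sum, WithLp.ofLp_smul, Finset.sum_apply,
      Pi.smul_apply, smul_eq_mul] at this
    simpa [mul_apply, mul_comm] using this

lemma exists_mul_transpose_eq_one_and_diag_eq_ite {Z n : ℕ} (hZn : Z ≤ n) :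
    ∃ W : Matrix (Fin Z) (Fin n) ℝ,
      W * Wᵀ = 1 ∧ ∀ j, (Wᵀ * W) j j = if j.val < Z then 1 else 0 := by
  refine ⟨(1 : Matrix (Fin n) (Fin n) ℝ).submatrix (Fin.castLE hZn) id, ?_, fun j => ?_⟩
  · rw [transpose_submatrix, transpose_one, ← submatrix_mul _ _ _ _ _ Function.bijective_id,
      Matrix.one_mul, submatrix_one _ (Fin.castLE_injective hZn)]
  · split_ifs with hj
    · obtain ⟨k, rfl⟩ : ∃ k, Fin.castLE hZn k = j := ⟨⟨j, hj⟩, rfl⟩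
      simp [mul_apply, one_apply, (Fin.castLE_injective hZn).eq_iff]
    · have (k : Fin Z) : Fin.castLE hZn k ≠ j := fun h => hj (h ▸ k.isLt)
      simp [mul_apply, one_apply, this]

section EckartYoung

variable {m k : Type*} [Fintype m] {n : ℕ} {X : Matrix m (Fin n) ℝ} {d : Fin n → ℝ}

lemma trace_mul_mul_transpose_of_transpose_mul_self_eq_diagonal (hX : Xᵀ * X = diagonal d)
    (M : Matrix (Fin n) (Fin n) ℝ) : (X * M * Xᵀ).trace = ∑ j, d j * M j j := by
  rw [trace_mul_comm, ← Matrix.mul_assoc, hX]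
  simp [trace, diagonal_mul]

lemma sum_le_trace_sub_mul_mul_transpose [Fintype k] (hX : Xᵀ * X = diagonal d)
    (hd : Antitone d) (C : Matrix m k ℝ) (F : Matrix k (Fin n) ℝ) :
    ∑ j : Fin n with Fintype.card k ≤ j.val, d j ≤ ((X - C * F) * (X - C * F)ᵀ).trace := by
  obtain ⟨r, hr, W, hW, hF⟩ := exists_mul_transpose_eq_one_and_mul_transpose_mul_eq F
  have hd₀ (j : Fin n) : 0 ≤ d j := by
    simpa [hX] using diag_transpose_mul_self_nonneg (W := X) j
  have htr : ∑ j, (Wᵀ * W) j j = r := (trace_transpose_mul_self hW).trans (by simp)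
  have htop := sum_mul_le_sum_lt_of_antitone (Fintype.card k) hd hd₀
    (diag_transpose_mul_self_nonneg (W := W)) (diag_transpose_mul_self_le_one hW)
    (by rw [htr]; exact_mod_cast hr)
  calc ∑ j : Fin n with Fintype.card k ≤ j.val, d j
      ≤ ∑ j, d j * ((1 : Matrix (Fin n) (Fin n) ℝ) - Wᵀ * W) j j := by
        have hsplit := sum_filter_add_sum_filter_not univ
          (fun j : Fin n => j.val < Fintype.card k) d
        simp only [not_lt] at hsplit
        simp only [Matrix.sub_apply, one_apply_eq, mul_sub, mul_one, sum_sub_distrib]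
        linarith
    _ = (X * (1 - Wᵀ * W) * Xᵀ).trace :=
        (trace_mul_mul_transpose_of_transpose_mul_self_eq_diagonal hX _).symm
    _ ≤ ((X - C * F) * (X - C * F)ᵀ).trace := trace_mul_one_sub_le hW hF X C

lemma trace_sub_mul_mul_transpose_eq_sum {Z : ℕ} (hX : Xᵀ * X = diagonal d)
    {W : Matrix (Fin Z) (Fin n) ℝ} (hW : W * Wᵀ = 1)
    (hWdiag : ∀ j, (Wᵀ * W) j j = if j.val < Z then 1 else 0) :
    ((X - X * Wᵀ * W) * (X - X * Wᵀ * W)ᵀ).trace = ∑ j : Fin n with Z ≤ j.val, d j := by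
  rw [show X - X * Wᵀ * W = X * (1 - Wᵀ * W) by
      rw [Matrix.mul_sub, Matrix.mul_one, Matrix.mul_assoc],
    mul_one_sub_mul_transpose_self hW,
    trace_mul_mul_transpose_of_transpose_mul_self_eq_diagonal hX, sum_filter]
  refine sum_congr rfl fun j _ => ?_
  by_cases hj : Z ≤ j.val
  · simp [hWdiag, hj, not_lt.2 hj]
  · simp [hWdiag, hj, not_le.1 hj]

end EckartYoung

section TaskLoss

variable {m k : Type*} [Fintype m] [Fintype k] {n : ℕ} {K : Matrix m (Fin n) ℝ}
  {Ψ L U : Matrix (Fin n) (Fin n) ℝ} {d : Fin n → ℝ}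

noncomputable def taskLoss (K : Matrix m (Fin n) ℝ) (Ψ : Matrix (Fin n) (Fin n) ℝ)
    (D : Matrix (Fin n) k ℝ) (E : Matrix k (Fin n) ℝ) : ℝ :=
  (K * (1 - D * E) * Ψ * (1 - D * E)ᵀ * Kᵀ).trace

lemma taskLoss_eq_trace (hΨ : Ψ = L * Lᵀ) (hU : U * Uᵀ = 1) (D : Matrix (Fin n) k ℝ)
    (E : Matrix k (Fin n) ℝ) :
    taskLoss K Ψ D E = ((K * L * Uᵀ - K * D * (E * L * Uᵀ))
      * (K * L * Uᵀ - K * D * (E * L * Uᵀ))ᵀ).trace := by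
  have hA : K * L * Uᵀ - K * D * (E * L * Uᵀ) = K * (1 - D * E) * L * Uᵀ := by
    simp only [Matrix.mul_sub, Matrix.sub_mul, Matrix.mul_one, Matrix.mul_assoc]
  rw [taskLoss, hA, hΨ]
  simp only [transpose_mul, transpose_transpose, Matrix.mul_assoc]
  rw [← Matrix.mul_assoc Uᵀ U, mul_eq_one_comm.1 hU, Matrix.one_mul]

lemma sum_le_taskLoss (hΨ : Ψ = L * Lᵀ) (hU : U * Uᵀ = 1)
    (hX : (K * L * Uᵀ)ᵀ * (K * L * Uᵀ) = diagonal d) (hd : Antitone d)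
    (D : Matrix (Fin n) k ℝ) (E : Matrix k (Fin n) ℝ) :
    ∑ j : Fin n with Fintype.card k ≤ j.val, d j ≤ taskLoss K Ψ D E := by
  rw [taskLoss_eq_trace hΨ hU]
  exact sum_le_trace_sub_mul_mul_transpose hX hd (K * D) (E * L * Uᵀ)

lemma exists_taskLoss_eq_sum {Z : ℕ} (hZn : Z ≤ n) (hΨ : Ψ = L * Lᵀ) (hL : IsUnit L.det)
    (hU : U * Uᵀ = 1) (hX : (K * L * Uᵀ)ᵀ * (K * L * Uᵀ) = diagonal d) :
    ∃ (E : Matrix (Fin Z) (Fin n) ℝ) (D : Matrix (Fin n) (Fin Z) ℝ),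
      taskLoss K Ψ D E = ∑ j : Fin n with Z ≤ j.val, d j := by
  obtain ⟨W, hW, hWdiag⟩ := exists_mul_transpose_eq_one_and_diag_eq_ite hZn
  refine ⟨W * U * L⁻¹, L * Uᵀ * Wᵀ, ?_⟩
  have hEL : W * U * L⁻¹ * L * Uᵀ = W := by
    rw [Matrix.mul_assoc (W * U), nonsing_inv_mul L hL, Matrix.mul_one, Matrix.mul_assoc, hU,
      Matrix.mul_one]
  rw [taskLoss_eq_trace hΨ hU, hEL, ← trace_sub_mul_mul_transpose_eq_sum hX hW hWdiag]
  simp only [Matrix.mul_assoc]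

end TaskLoss

lemma of_mul_transpose_eq_one {n : Type*} [Fintype n] [DecidableEq n] {u : n → n → ℝ}
    (horth : ∀ i j, u i ⬝ᵥ u j = if i = j then 1 else 0) : of u * (of u)ᵀ = 1 := by
  ext i j
  simpa [mul_apply, one_apply, dotProduct] using horth i j

lemma of_mul_mul_transpose_eq_diagonal {n : Type*} [Fintype n] [DecidableEq n]
    {S : Matrix n n ℝ} {u : n → n → ℝ} {μ : n → ℝ}
    (horth : ∀ i j, u i ⬝ᵥ u j = if i = j then 1 else 0) (heig : ∀ i, S *ᵥ u i = μ i • u i) :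
    of u * S * (of u)ᵀ = diagonal μ := by
  have hSU : S * (of u)ᵀ = (of u)ᵀ * diagonal μ := by
    ext k i
    rw [mul_diagonal]
    simpa [mul_apply, mulVec, dotProduct, mul_comm] using congrFun (heig i) k
  rw [Matrix.mul_assoc, hSU, ← Matrix.mul_assoc, of_mul_transpose_eq_one horth, Matrix.one_mul]

lemma antitone_fin_of_succ_le {n : ℕ} {μ : ℕ → ℝ}
    (hμ : ∀ i : ℕ, 1 ≤ i → i < n → μ (i + 1) ≤ μ i) :
    Antitone fun j : Fin n => μ ((j : ℕ) + 1) := by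
  have : AntitoneOn μ (Set.Icc 1 n) := antitoneOn_of_succ_le Set.ordConnected_Icc
    fun a _ ha ha' => by simpa using hμ a ha.1 (by simpa using ha'.2)
  exact fun j k hjk => this ⟨by omega, by omega⟩ ⟨by omega, by omega⟩ (by simpa using hjk)

lemma sum_Icc_succ_eq_sum_fin {M : Type*} [AddCommMonoid M] (f : ℕ → M) (Z n : ℕ) :
    ∑ i ∈ Icc (Z + 1) n, f i = ∑ j : Fin n with Z ≤ j.val, f (j + 1) := by
  rw [sum_filter, Fin.sum_univ_eq_sum_range (fun j => if Z ≤ j then f (j + 1) else 0),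
    ← sum_filter, ← Ico_add_one_right_eq_Icc, ← sum_Ico_add']
  congr 1
  ext j
  simp [and_comm]

theorem task_aware_pca_achievability_general
    (n m Z : ℕ) (hZn : Z ≤ n)
    (Ψ L : Matrix (Fin n) (Fin n) ℝ) (hΨ : Ψ.PosDef) (hChol : Ψ = L * Lᵀ)
    (K : Matrix (Fin m) (Fin n) ℝ)
    (μ : ℕ → ℝ) (u : Fin n → (Fin n → ℝ))
    (hdesc : ∀ i : ℕ, 1 ≤ i → i < n → μ (i + 1) ≤ μ i)
    (horth : ∀ i j : Fin n, dotProduct (u i) (u j) = if i = j then 1 else 0)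
    (heig : ∀ i : Fin n, (Lᵀ * Kᵀ * K * L).mulVec (u i) = μ ((i : ℕ) + 1) • u i) :
    (∃ (E : Matrix (Fin Z) (Fin n) ℝ) (D : Matrix (Fin n) (Fin Z) ℝ),
      (K * (1 - D * E) * Ψ * (1 - D * E)ᵀ * Kᵀ).trace =
        ∑ i ∈ Finset.Icc (Z + 1) n, μ i) ∧
    IsLeast {l : ℝ | ∃ (E : Matrix (Fin Z) (Fin n) ℝ) (D : Matrix (Fin n) (Fin Z) ℝ),
        l = (K * (1 - D * E) * Ψ * (1 - D * E)ᵀ * Kᵀ).trace}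
      (∑ i ∈ Finset.Icc (Z + 1) n, μ i) := by
  have hU : of u * (of u)ᵀ = 1 := of_mul_transpose_eq_one horth
  have hX : (K * L * (of u)ᵀ)ᵀ * (K * L * (of u)ᵀ) = diagonal fun j : Fin n => μ ((j : ℕ) + 1) := by
    rw [← of_mul_mul_transpose_eq_diagonal horth heig]
    simp only [transpose_mul, transpose_transpose, Matrix.mul_assoc]
  have hL : IsUnit L.det := by
    have := hΨ.det_pos
    exact isUnit_iff_ne_zero.2 fun h => by simp [hChol, h] at this
  obtain ⟨E₀, D₀, hopt⟩ := exists_taskLoss_eq_sum hZn hChol hL hU hX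
  rw [← sum_Icc_succ_eq_sum_fin] at hopt
  refine ⟨⟨E₀, D₀, hopt⟩, ⟨E₀, D₀, hopt.symm⟩, ?_⟩
  rintro _ ⟨E, D, rfl⟩
  have hlower := sum_le_taskLoss hChol hU hX (antitone_fin_of_succ_le hdesc) D E
  rwa [Fintype.card_fin, ← sum_Icc_succ_eq_sum_fin] at hlower

/-- task-aware PCA achievability: there exist an encoder
`E ∈ ℝ^{Z×n}` and decoder `D ∈ ℝ^{n×Z}` attaining loss `μ_{Z+1} + ⋯ + μ_n`;
hence this value is the minimum of the task-aware compression loss. -/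
theorem task_aware_pca_achievability
    (n m Z : ℕ) (hn : 0 < n) (hm : 0 < m) (hZ : 0 < Z) (hZn : Z ≤ n)
    (Ψ L : Matrix (Fin n) (Fin n) ℝ) (hΨ : Ψ.PosDef) (hChol : Ψ = L * Lᵀ)
    (hLtri : ∀ i j : Fin n, i < j → L i j = 0) (hLdiag : ∀ i : Fin n, 0 < L i i)
    (K : Matrix (Fin m) (Fin n) ℝ)
    (μ : ℕ → ℝ) (u : Fin n → (Fin n → ℝ))
    (hdesc : ∀ i : ℕ, 1 ≤ i → i < n → μ (i + 1) ≤ μ i)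
    (hzero : μ (n + 1) = 0)
    (horth : ∀ i j : Fin n, dotProduct (u i) (u j) = if i = j then 1 else 0)
    (heig : ∀ i : Fin n, (Lᵀ * Kᵀ * K * L).mulVec (u i) = μ ((i : ℕ) + 1) • u i) :
    (∃ (E : Matrix (Fin Z) (Fin n) ℝ) (D : Matrix (Fin n) (Fin Z) ℝ),
      (K * (1 - D * E) * Ψ * (1 - D * E)ᵀ * Kᵀ).trace =
        ∑ i ∈ Finset.Icc (Z + 1) n, μ i) ∧
    IsLeast {l : ℝ | ∃ (E : Matrix (Fin Z) (Fin n) ℝ) (D : Matrix (Fin n) (Fin Z) ℝ),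
        l = (K * (1 - D * E) * Ψ * (1 - D * E)ᵀ * Kᵀ).trace}
      (∑ i ∈ Finset.Icc (Z + 1) n, μ i) :=
  task_aware_pca_achievability_general n m Z hZn Ψ L hΨ hChol K μ u hdesc horth heig
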